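/- Let s ∈ ℝ, p ∈ [1,∞], and let w : ℤⁿ × Gr(d,n) → (0,∞) satisfy Σ_{A ∈ Ω_k} w(k,A)² < ∞ for every k ∈ ℤⁿ, with W_k := Σ_{A ∈ Ω_k} w(k,A)² > 0. Define the normalized weight w̃(k,A) = w(k,A)/√(W_k). Then for every f ∈ C^∞(𝕋ⁿ), the function R_d^{*,w̃} R_d f whose k-th Fourier coefficient is Σ_{A ∈ Ω_k} w̃(k,A)² \widehat{R_{d,A} f}(k) is well defined and equals f; consequently ‖f‖_{L_s^p(𝕋ⁿ)} = ‖R_d^{*,w̃} R_d f‖_{L_s^p(𝕋ⁿ)}. -/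

import Mathlib

noncomputable section
open MeasureTheory Real
open scoped ENNReal NNReal

instance : Fact ((0:ℝ) < 1) := ⟨one_pos⟩

/-- The flat torus `𝕋ⁿ = ℝⁿ/ℤⁿ`, with the probability Haar (Lebesgue) measure. -/
abbrev Torus (n : ℕ) := Fin n → AddCircle (1:ℝ)

/-- The quotient map `π : ℝⁿ → 𝕋ⁿ`. -/
def tmap {n : ℕ} (x : Fin n → ℝ) : Torus n := fun i => (x i : AddCircle (1:ℝ))

/-- The character `x ↦ e^{2πi k·x}` on the torus. -/
def char {n : ℕ} (k : Fin n → ℤ) (x : Torus n) : ℂ := ∏ i, fourier (k i) (x i)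

/-- The Fourier coefficient `f̂(k) = ∫ f(x) e^{−2πi k·x} dx`. -/
def fCoeff {n : ℕ} (f : Torus n → ℂ) (k : Fin n → ℤ) : ℂ := ∫ x, char (-k) x * f x

/-- The `d`-plane Radon transform on `𝕋ⁿ` associated to integer vectors `v₁, …, v_d`:
`R f(x) = ∫_{[0,1]^d} f(x + t₁v₁ + ⋯ + t_d v_d) dt`. -/
def radon {n d : ℕ} (v : Fin d → Fin n → ℤ) (f : Torus n → ℂ) (x : Torus n) : ℂ :=
  ∫ t in Set.Icc (0 : Fin d → ℝ) 1, f (x + tmap fun i => ∑ j, t j * (v j i : ℝ))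

/-- The Grassmannian `Gr(d,n)`: `d`-dimensional `ℚ`-linear subspaces of `ℚⁿ`. -/
def Gr (d n : ℕ) : Type := {A : Submodule ℚ (Fin n → ℚ) // Module.finrank ℚ A = d}

/-- `A ∈ Ω_k` iff `k ⊥ A`, i.e. `k·q = 0` for all `q ∈ A`. -/
def perp {n : ℕ} (d : ℕ) (k : Fin n → ℤ) : Set (Gr d n) :=
  {A | ∀ q ∈ A.1, ∑ i, (k i : ℚ) * q i = 0}

/-- `V` is a basis of integer vectors for `A ∈ Gr(d,n)`. -/
def IsIntBasis {n d : ℕ} (A : Gr d n) (V : Fin d → Fin n → ℤ) : Prop :=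
  LinearIndependent ℚ (fun j => fun i => (V j i : ℚ)) ∧
    Submodule.span ℚ (Set.range (fun j => fun i => (V j i : ℚ))) = A.1

/-- `W_k = Σ_{A ∈ Ω_k} w(k,A)²`. -/
def Wk {n : ℕ} (d : ℕ) (w : (Fin n → ℤ) → Gr d n → ℝ) (k : Fin n → ℤ) : ℝ :=
  (∑' A : perp d k, ENNReal.ofReal (w k A.1 ^ 2)).toReal

/-- `⟨k⟩² = 1 + |k|²` for `k ∈ ℤⁿ`. -/
def nrmSqN {n : ℕ} (k : Fin n → ℤ) : ℝ := 1 + ∑ i, (k i : ℝ)^2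
instance probAC : IsProbabilityMeasure (volume : Measure (AddCircle (1:ℝ))) :=
  ⟨by rw [AddCircle.measure_univ]; simp⟩

lemma continuous_char {n : ℕ} (k : Fin n → ℤ) : Continuous (char k) :=
  continuous_finset_prod _ fun i _ => (fourier (k i)).continuous.comp (continuous_apply i)

lemma continuous_tmap {n : ℕ} : Continuous (tmap (n := n)) :=
  continuous_pi fun i => continuous_quotient_mk'.comp (continuous_apply i)

lemma tmap_neg {n : ℕ} (c : Fin n → ℝ) : tmap (-c) = -(tmap c) := rfl

lemma char_add {n : ℕ} (k : Fin n → ℤ) (x y : Torus n) :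
    char k (x + y) = char k x * char k y := by
  simp only [char, ← Finset.prod_mul_distrib]
  refine Finset.prod_congr rfl fun i _ => ?_
  simp only [fourier_apply, Pi.add_apply, smul_add, AddCircle.toCircle_add]
  push_cast
  ring

lemma char_tmap {n : ℕ} (k : Fin n → ℤ) (y : Fin n → ℝ) :
    char k (tmap y) = Complex.exp (2 * π * Complex.I * (∑ i, (k i : ℝ) * y i)) := by
  simp only [char, tmap, fourier_coe_apply, div_one]
  rw [← Complex.exp_sum]
  congr 1
  push_cast
  rw [Finset.mul_sum]
  exact Finset.sum_congr rfl fun i _ => by ring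

lemma char_tmap_one {n : ℕ} (k : Fin n → ℤ) (y : Fin n → ℝ)
    (h : ∑ i, (k i : ℝ) * y i = 0) : char k (tmap y) = 1 := by
  rw [char_tmap, h]; simp

lemma norm_char {n : ℕ} (k : Fin n → ℤ) (x : Torus n) : ‖char k x‖ = 1 := by
  simp [char, Circle.norm_coe]

lemma tmap_section {n : ℕ} (y : Torus n) :
    tmap (fun i => ((AddCircle.equivIoc (1:ℝ) 0 (y i) : Set.Ioc (0:ℝ) (0+1)) : ℝ)) = y := by
  funext i
  exact (AddCircle.equivIoc (1:ℝ) 0).symm_apply_apply (y i)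

lemma measurable_of_tmap {n : ℕ} (f : Torus n → ℂ)
    (hf : Continuous (fun x : Fin n → ℝ => f (tmap x))) : Measurable f := by
  have hg : Measurable (fun y : Torus n => fun i =>
      ((AddCircle.equivIoc (1:ℝ) 0 (y i) : Set.Ioc (0:ℝ) (0+1)) : ℝ)) := by
    refine measurable_pi_lambda _ fun i => ?_
    exact measurable_subtype_coe.comp
      ((AddCircle.measurableEquivIoc 1 0).measurable.comp (measurable_pi_apply i))
  have : f = (fun x : Fin n → ℝ => f (tmap x)) ∘ (fun y : Torus n => fun i =>
      ((AddCircle.equivIoc (1:ℝ) 0 (y i) : Set.Ioc (0:ℝ) (0+1)) : ℝ)) := by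
    funext y; simp [Function.comp, tmap_section]
  rw [this]
  exact hf.measurable.comp hg

lemma bounded_of_tmap {n : ℕ} (f : Torus n → ℂ)
    (hf : Continuous (fun x : Fin n → ℝ => f (tmap x))) : ∃ C, ∀ y, ‖f y‖ ≤ C := by
  obtain ⟨C, hC⟩ := (isCompact_Icc (a := (0 : Fin n → ℝ)) (b := 1)).exists_bound_of_continuousOn
    (hf.continuousOn (s := Set.Icc 0 1))
  refine ⟨C, fun y => ?_⟩
  have : ∀ i, ∃ b : ℝ, b ∈ Set.Icc (0:ℝ) 1 ∧ (b : AddCircle (1:ℝ)) = y i := by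
    intro i
    obtain ⟨b, hb, hb2⟩ := AddCircle.eq_coe_Ico (y i)
    exact ⟨b, ⟨hb.1, hb.2.le⟩, hb2⟩
  choose b hb1 hb2 using this
  have hby : tmap b = y := funext hb2
  have hbIcc : b ∈ Set.Icc (0 : Fin n → ℝ) 1 := ⟨fun i => (hb1 i).1, fun i => (hb1 i).2⟩
  simpa [hby] using hC b hbIcc

lemma inner_translate {n : ℕ} (k : Fin n → ℤ) (f : Torus n → ℂ) (c : Fin n → ℝ)
    (hc : ∑ i, (k i : ℝ) * c i = 0) :
    ∫ x, char (-k) x * f (x + tmap c) = fCoeff f k := by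
  have key := integral_add_right_eq_self (μ := (volume : Measure (Torus n)))
    (fun x => char (-k) (x - tmap c) * f x) (tmap c)
  have h1 : ∀ x : Torus n, char (-k) (x + tmap c - tmap c) * f (x + tmap c)
      = char (-k) x * f (x + tmap c) := by
    intro x; rw [add_sub_cancel_right]
  have h2 : ∀ x : Torus n, char (-k) (x - tmap c) * f x = char (-k) x * f x := by
    intro x
    rw [sub_eq_add_neg, ← tmap_neg, char_add, char_tmap_one, mul_one]
    simp only [Pi.neg_apply, Int.cast_neg, neg_mul, mul_neg, neg_neg]
    exact hc
  calc ∫ x, char (-k) x * f (x + tmap c)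
      = ∫ x, char (-k) (x + tmap c - tmap c) * f (x + tmap c) := by simp_rw [h1]
    _ = ∫ x, char (-k) (x - tmap c) * f x := key
    _ = fCoeff f k := by simp_rw [h2]; rfl

lemma volume_Icc01 {d : ℕ} : (volume (Set.Icc (0 : Fin d → ℝ) 1)) = 1 := by
  rw [Real.volume_Icc_pi]
  simp

lemma fCoeff_radon_eq {n d : ℕ} (k : Fin n → ℤ) (v : Fin d → Fin n → ℤ)
    (hv : ∀ j, ∑ i, (k i : ℝ) * (v j i : ℝ) = 0)
    (f : Torus n → ℂ) (hf : Continuous (fun x : Fin n → ℝ => f (tmap x))) :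
    fCoeff (radon v f) k = fCoeff f k := by
  have hort : ∀ t : Fin d → ℝ, ∑ i, (k i : ℝ) * (∑ j, t j * (v j i : ℝ)) = 0 := by
    intro t
    calc ∑ i, (k i : ℝ) * (∑ j, t j * (v j i : ℝ))
        = ∑ i, ∑ j, t j * ((k i : ℝ) * (v j i : ℝ)) := by
          refine Finset.sum_congr rfl fun i _ => ?_
          rw [Finset.mul_sum]
          exact Finset.sum_congr rfl fun j _ => by ring
      _ = ∑ j, ∑ i, t j * ((k i : ℝ) * (v j i : ℝ)) := Finset.sum_comm
      _ = ∑ j : Fin d, t j * ∑ i, (k i : ℝ) * (v j i : ℝ) := by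
          exact Finset.sum_congr rfl fun j _ => (Finset.mul_sum _ _ _).symm
      _ = 0 := by simp [hv]
  have hfm := measurable_of_tmap f hf
  obtain ⟨C, hC⟩ := bounded_of_tmap f hf
  set ν := (volume : Measure (Fin d → ℝ)).restrict (Set.Icc 0 1) with hν
  have : IsFiniteMeasure ν := ⟨by rw [Measure.restrict_apply_univ, volume_Icc01]; simp⟩
  have hint : Integrable (Function.uncurry fun (x : Torus n) (t : Fin d → ℝ) =>
      char (-k) x * f (x + tmap fun i => ∑ j, t j * (v j i : ℝ)))
      ((volume : Measure (Torus n)).prod ν) := by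
    constructor
    · apply Measurable.aestronglyMeasurable
      apply Measurable.mul
      · exact (continuous_char (-k)).measurable.comp measurable_fst
      · apply hfm.comp
        apply Measurable.add measurable_fst
        apply (continuous_tmap.measurable).comp
        apply measurable_pi_lambda
        intro i
        apply Finset.measurable_sum
        intro j _
        exact ((measurable_pi_apply j).comp measurable_snd).mul_const _
    · apply HasFiniteIntegral.of_bounded (C := C)
      filter_upwards with z
      rw [Function.uncurry, norm_mul, norm_char, one_mul]
      exact hC _
  calc fCoeff (radon v f) k
      = ∫ x, ∫ t in Set.Icc (0 : Fin d → ℝ) 1,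
          char (-k) x * f (x + tmap fun i => ∑ j, t j * (v j i : ℝ)) := by
        unfold fCoeff radon
        congr 1; funext x
        rw [integral_const_mul]
    _ = ∫ t in Set.Icc (0 : Fin d → ℝ) 1, ∫ x,
          char (-k) x * f (x + tmap fun i => ∑ j, t j * (v j i : ℝ)) := by
        exact integral_integral_swap hint
    _ = ∫ _t in Set.Icc (0 : Fin d → ℝ) 1, fCoeff f k := by
        refine integral_congr_ae (Filter.Eventually.of_forall fun t => ?_)
        exact inner_translate k f _ (hort t)
    _ = fCoeff f k := by
        rw [integral_const, ← hν, measureReal_def, Measure.restrict_apply_univ, volume_Icc01]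
        simp

theorem normalized_normal_operator_identity
    (n d : ℕ) (hn : 2 ≤ n) (hd1 : 1 ≤ d) (hd2 : d ≤ n - 1)
    (s : ℝ) (p : ℝ≥0∞) (hp : 1 ≤ p)
    (V : (A : Gr d n) → Fin d → Fin n → ℤ) (hV : ∀ A : Gr d n, IsIntBasis A (V A))
    (w : (Fin n → ℤ) → Gr d n → ℝ) (hw : ∀ k A, 0 < w k A)
    (hfin : ∀ k : Fin n → ℤ, (∑' A : perp d k, ENNReal.ofReal (w k A.1 ^ 2)) < ⊤)
    (hWpos : ∀ k : Fin n → ℤ, 0 < Wk d w k)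
    (f : Torus n → ℂ) (hf : ContDiff ℝ (⊤ : ℕ∞) (fun x : Fin n → ℝ => f (tmap x))) :
    (∀ k : Fin n → ℤ,
      HasSum (fun A : perp d k =>
        (Complex.ofReal (w k A.1 ^ 2 / Wk d w k)) * fCoeff (radon (V A.1) f) k)
        (fCoeff f k)) ∧
    eLpNorm (fun x : Torus n =>
        ∑' k : Fin n → ℤ, (Complex.ofReal (nrmSqN k ^ (s/2))) * fCoeff f k * char k x) p volume
      = eLpNorm (fun x : Torus n =>
          ∑' k : Fin n → ℤ, (Complex.ofReal (nrmSqN k ^ (s/2))) *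
            (∑' A : perp d k,
              (Complex.ofReal (w k A.1 ^ 2 / Wk d w k)) * fCoeff (radon (V A.1) f) k) *
            char k x) p volume := by
  have hcont : Continuous (fun x : Fin n → ℝ => f (tmap x)) := hf.continuous
  have hv : ∀ (k : Fin n → ℤ) (A : perp d k) (j : Fin d),
      ∑ i, (k i : ℝ) * (V A.1 j i : ℝ) = 0 := by
    intro k A j
    have hmem : (fun i => (V A.1 j i : ℚ)) ∈ A.1.1 := by
      rw [← (hV A.1).2]
      exact Submodule.subset_span ⟨j, rfl⟩
    have hq : ∑ i, (k i : ℚ) * (V A.1 j i : ℚ) = 0 := A.2 _ hmem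
    have := congrArg (Rat.cast (K := ℝ)) hq
    push_cast at this
    exact this
  have hradon : ∀ (k : Fin n → ℤ) (A : perp d k),
      fCoeff (radon (V A.1) f) k = fCoeff f k := fun k A =>
    fCoeff_radon_eq k (V A.1) (hv k A) f hcont
  have part1 : ∀ k : Fin n → ℤ,
      HasSum (fun A : perp d k =>
        (Complex.ofReal (w k A.1 ^ 2 / Wk d w k)) * fCoeff (radon (V A.1) f) k)
        (fCoeff f k) := by
    intro k
    have hsumm : Summable (fun A : perp d k => w k A.1 ^ 2) := by
      refine (ENNReal.summable_toReal (hfin k).ne).congr fun A => ?_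
      exact ENNReal.toReal_ofReal (sq_nonneg _)
    have htsum : ∑' A : perp d k, w k A.1 ^ 2 = Wk d w k := by
      unfold Wk
      rw [ENNReal.tsum_toReal_eq (fun A => ENNReal.ofReal_ne_top)]
      exact tsum_congr fun A => (ENNReal.toReal_ofReal (sq_nonneg _)).symm
    have h1 : HasSum (fun A : perp d k => w k A.1 ^ 2 / Wk d w k) 1 := by
      have h := hsumm.hasSum
      rw [htsum] at h
      simpa [div_self (hWpos k).ne'] using h.div_const (Wk d w k)
    have h2 : HasSum (fun A : perp d k => (Complex.ofReal (w k A.1 ^ 2 / Wk d w k))) 1 := by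
      simpa using h1.mapL Complex.ofRealCLM
    have h3 := h2.mul_right (fCoeff f k)
    rw [one_mul] at h3
    refine h3.congr_fun fun A => ?_
    rw [hradon k A]
  refine ⟨part1, ?_⟩
  have heq : ∀ k : Fin n → ℤ,
      (∑' A : perp d k,
        (Complex.ofReal (w k A.1 ^ 2 / Wk d w k)) * fCoeff (radon (V A.1) f) k)
      = fCoeff f k := fun k => (part1 k).tsum_eq
  congr 1
  funext x
  refine tsum_congr fun k => ?_
  rw [heq k]
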